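/- (Example: pre-garbling can increase expected utility.) Let κ₁ be the channel from {0,1} to {0,1} with matrix columns κ₁(·|0) = (0.9, 0.1) and κ₁(·|1) = (0, 1), and let κ₂ be the channel with columns κ₂(·|0) = (0, 1) and κ₂(·|1) = (0.9, 0.1) (i.e. κ₂ = κ₁ composed with the input swap). Let p be the uniform distribution on {0,1} and let u : {0,1} × {0,1} → ℝ be the utility with u(0,0)=2, u(1,1)=1 and u(a,s)=0 otherwise (first argument the action, second the state). Then the optimal expected utility satisfies U(p,u,κ₁) = 1.4 and U(p,u,κ₂) = 1.45; in particular U(p,u,κ₁) < U(p,u,κ₂). -/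

import Mathlib

/-! An optimal decision rule picks, for each observation `x`, an action maximising
`∑ s, p s * κ x s * u (a, s)`. Under `κ₁` that is action 0 on `x = 0` (worth 0.9) and action 1
on `x = 1` (worth 0.5); under `κ₂` it is action 1 on `x = 0` (worth 0.45) and action 0 on
`x = 1` (worth 1, since `x = 1` now identifies the valuable state 0 with certainty). -/

open Finset

/-- A probability distribution on a finite set. -/
def IsDist {S : Type} [Fintype S] (p : S → ℝ) : Prop :=
  (∀ s, 0 ≤ p s) ∧ ∑ s, p s = 1

/-- A channel from `S` to `X`: a column-stochastic matrix. -/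
def IsChannel {S X : Type} [Fintype S] [Fintype X] (κ : X → S → ℝ) : Prop :=
  (∀ x s, 0 ≤ κ x s) ∧ ∀ s, ∑ x, κ x s = 1

/-- `κ₁` is a garbling of `κ₂` (the Blackwell order `κ₁ ⪯ κ₂`). -/
def IsGarbling {S X₁ X₂ : Type} [Fintype S] [Fintype X₁] [Fintype X₂]
    (κ₁ : X₁ → S → ℝ) (κ₂ : X₂ → S → ℝ) : Prop :=
  ∃ lam : X₁ → X₂ → ℝ, IsChannel lam ∧ ∀ x₁ s, κ₁ x₁ s = ∑ x₂, lam x₁ x₂ * κ₂ x₂ s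

/-- Optimal expected utility: maximum over decision rules `d : X → A`. -/
noncomputable def optUtility {S X A : Type} [Fintype S] [Fintype X] [Fintype A]
    (p : S → ℝ) (u : A × S → ℝ) (κ : X → S → ℝ) : ℝ :=
  ⨆ d : X → A, ∑ s, ∑ x, p s * κ x s * u (d x, s)

/-- Mutual information between input (with distribution `p`) and output of channel `κ`;
terms with `κ x s = 0` are taken to be `0`. -/
noncomputable def mutualInfo {S X : Type} [Fintype S] [Fintype X]
    (p : S → ℝ) (κ : X → S → ℝ) : ℝ :=
  ∑ s, ∑ x, if κ x s = 0 then 0 else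
    p s * κ x s * Real.log (κ x s / ∑ s', p s' * κ x s')

/-- Channel composition: `(κ·λ) x s = ∑ t, κ x t * λ t s`. -/
def chanComp {S T X : Type} [Fintype S] [Fintype T] [Fintype X]
    (κ : X → T → ℝ) (lam : T → S → ℝ) : X → S → ℝ :=
  fun x s => ∑ t, κ x t * lam t s

/-- Marginal on `S` of a joint distribution on `S × X₁ × X₂`. -/
noncomputable def margS3 {S X₁ X₂ : Type} [Fintype S] [Fintype X₁] [Fintype X₂]
    (P : S × X₁ × X₂ → ℝ) (s : S) : ℝ := ∑ x₁, ∑ x₂, P (s, x₁, x₂)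

/-- The channel `X₁ ← S` of conditional probabilities `P(X₁ = x₁ | S = s)`. -/
noncomputable def chan1of3 {S X₁ X₂ : Type} [Fintype S] [Fintype X₁] [Fintype X₂]
    (P : S × X₁ × X₂ → ℝ) (x₁ : X₁) (s : S) : ℝ :=
  (∑ x₂, P (s, x₁, x₂)) / margS3 P s

/-- The channel `X₂ ← S` of conditional probabilities `P(X₂ = x₂ | S = s)`. -/
noncomputable def chan2of3 {S X₁ X₂ : Type} [Fintype S] [Fintype X₁] [Fintype X₂]
    (P : S × X₁ × X₂ → ℝ) (x₂ : X₂) (s : S) : ℝ :=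
  (∑ x₁, P (s, x₁, x₂)) / margS3 P s

/-- Pushforward of a joint distribution on `S × X₁ × X₂` along `f : S → S'`. -/
noncomputable def push3 {S S' X₁ X₂ : Type} [Fintype S] [Fintype X₁] [Fintype X₂]
    [DecidableEq S'] (f : S → S') (P : S × X₁ × X₂ → ℝ) : S' × X₁ × X₂ → ℝ :=
  fun q => ∑ s ∈ Finset.univ.filter (fun s => f s = q.1), P (s, q.2.1, q.2.2)

/-- The channel `κ₁` with columns `κ₁(·|0) = (0.9, 0.1)` and `κ₁(·|1) = (0, 1)`. -/
noncomputable def exKappa1 : Fin 2 → Fin 2 → ℝ := fun x s =>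
  if x = 0 then (if s = 0 then 0.9 else 0) else (if s = 0 then 0.1 else 1)

/-- The channel `κ₂` with columns `κ₂(·|0) = (0, 1)` and `κ₂(·|1) = (0.9, 0.1)`,
i.e. `κ₁` composed with the input swap. -/
noncomputable def exKappa2 : Fin 2 → Fin 2 → ℝ := fun x s =>
  if x = 0 then (if s = 0 then 0 else 0.9) else (if s = 0 then 1 else 0.1)

theorem ciSup_eq_of_forall_le_apply {ι α : Type*} [ConditionallyCompleteLattice α]
    {f : ι → α} {i₀ : ι} (h : ∀ i, f i ≤ f i₀) : ⨆ i, f i = f i₀ :=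
  have : Nonempty ι := ⟨i₀⟩
  le_antisymm (ciSup_le h) (le_ciSup ⟨f i₀, Set.forall_mem_range.2 h⟩ i₀)

theorem ciSup_fin_two {α : Type*} [ConditionallyCompleteLinearOrder α] (f : Fin 2 → α) :
    ⨆ i, f i = max (f 0) (f 1) := by
  rcases le_total (f 0) (f 1) with h | h
  · rw [max_eq_right h]
    exact ciSup_eq_of_forall_le_apply (Fin.forall_fin_two.2 ⟨h, le_rfl⟩)
  · rw [max_eq_left h]
    exact ciSup_eq_of_forall_le_apply (Fin.forall_fin_two.2 ⟨le_rfl, h⟩)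

section DecisionRule

variable {S X A : Type} [Fintype S] [Fintype X] [Fintype A]

/-- The unnormalised posterior expected utility of action `a` after observing `x`. -/
def obsUtility (p : S → ℝ) (u : A × S → ℝ) (κ : X → S → ℝ) (x : X) (a : A) : ℝ :=
  ∑ s, p s * κ x s * u (a, s)

theorem optUtility_eq_sum_iSup_obsUtility [Nonempty A] (p : S → ℝ) (u : A × S → ℝ)
    (κ : X → S → ℝ) : optUtility p u κ = ∑ x, ⨆ a, obsUtility p u κ x a := by
  have expected_eq (d : X → A) :
      ∑ s, ∑ x, p s * κ x s * u (d x, s) = ∑ x, obsUtility p u κ x (d x) :=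
    Finset.sum_comm
  choose best hbest using fun x => Finite.exists_max (obsUtility p u κ x)
  have iSup_eq_best (x : X) : ⨆ a, obsUtility p u κ x a = obsUtility p u κ x (best x) :=
    ciSup_eq_of_forall_le_apply (hbest x)
  simp only [optUtility, expected_eq, iSup_eq_best]
  exact ciSup_eq_of_forall_le_apply fun d => Finset.sum_le_sum fun x _ => hbest x (d x)

end DecisionRule

noncomputable def exPrior : Fin 2 → ℝ := fun _ => 1 / 2

def exUtility : Fin 2 × Fin 2 → ℝ := fun as =>
  if as = (0, 0) then 2 else if as = (1, 1) then 1 else 0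

theorem optUtility_exKappa1 : optUtility exPrior exUtility exKappa1 = 1.4 := by
  simp only [optUtility_eq_sum_iSup_obsUtility, ciSup_fin_two, Fin.sum_univ_two, obsUtility,
    exPrior, exUtility, exKappa1]
  norm_num

theorem optUtility_exKappa2 : optUtility exPrior exUtility exKappa2 = 1.45 := by
  simp only [optUtility_eq_sum_iSup_obsUtility, ciSup_fin_two, Fin.sum_univ_two, obsUtility,
    exPrior, exUtility, exKappa2]
  norm_num

theorem pregarbling_increases_utility_example :
    optUtility (fun _ : Fin 2 => (1 : ℝ) / 2)
        (fun as : Fin 2 × Fin 2 =>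
          if as = (0, 0) then (2 : ℝ) else if as = (1, 1) then 1 else 0)
        exKappa1 = 1.4 ∧
    optUtility (fun _ : Fin 2 => (1 : ℝ) / 2)
        (fun as : Fin 2 × Fin 2 =>
          if as = (0, 0) then (2 : ℝ) else if as = (1, 1) then 1 else 0)
        exKappa2 = 1.45 ∧
    optUtility (fun _ : Fin 2 => (1 : ℝ) / 2)
        (fun as : Fin 2 × Fin 2 =>
          if as = (0, 0) then (2 : ℝ) else if as = (1, 1) then 1 else 0)
        exKappa1 <
      optUtility (fun _ : Fin 2 => (1 : ℝ) / 2)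
        (fun as : Fin 2 × Fin 2 =>
          if as = (0, 0) then (2 : ℝ) else if as = (1, 1) then 1 else 0)
        exKappa2 :=
  ⟨optUtility_exKappa1, optUtility_exKappa2,
    optUtility_exKappa1.trans_lt
      ((by norm_num : (1.4 : ℝ) < 1.45).trans_eq optUtility_exKappa2.symm)⟩
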